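/- Let Ω ⊂ ℝ^d be a nonempty compact set. Then the set M^+_{fin,dif}(Ω) of finitely supported measures with pairwise-distinct disjoint subset sums of weights is dense in M^+(Ω) with respect to the extended 1-Wasserstein metric: for every μ ∈ M^+(Ω) and every ε > 0 there exists ν ∈ M^+_{fin,dif}(Ω) with W1(μ, ν) < ε. -/

import Mathlib

open MeasureTheory Filter Set

/-- The 1-Wasserstein distance, via Kantorovich–Rubinstein duality: the supremum of
`∫ φ dμ - ∫ φ dν` over 1-Lipschitz functions `φ`. -/
noncomputable def W1 {E : Type*} [MeasurableSpace E] [PseudoMetricSpace E]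
    (μ ν : Measure E) : ℝ :=
  ⨆ φ : {φ : E → ℝ // LipschitzWith 1 φ}, ((∫ x, φ.1 x ∂μ) - ∫ x, φ.1 x ∂ν)

/-- The extension of the 1-Wasserstein distance to positive finite measures:
`W1(s₁μ₁, s₂μ₂) = W1(μ₁, μ₂) + |s₁ - s₂|` for probability measures `μᵢ` and `sᵢ > 0`. -/
noncomputable def W1ext {E : Type*} [MeasurableSpace E] [PseudoMetricSpace E]
    (μ ν : Measure E) : ℝ :=
  W1 ((μ Set.univ)⁻¹ • μ) ((ν Set.univ)⁻¹ • ν)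
    + |(μ Set.univ).toReal - (ν Set.univ).toReal|

/-- `M⁺(Ω)`: the strictly positive finite Borel measures supported in `Ω`. -/
def Mplus {E : Type*} [MeasurableSpace E] (Ω : Set E) : Set (Measure E) :=
  {μ | μ Set.univ ≠ 0 ∧ μ Set.univ ≠ ⊤ ∧ μ Ωᶜ = 0}

/-- `M⁺_{fin,dif}(Ω)`: finitely supported positive measures `∑ aᵢ δ_{xᵢ}` such that any two
disjoint nonempty subsets of the weights have different sums. -/
def MplusFinDif {E : Type*} [MeasurableSpace E] (Ω : Set E) : Set (Measure E) :=
  {μ | ∃ n : ℕ, 0 < n ∧ ∃ (x : Fin n → E) (a : Fin n → ℝ),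
    (∀ i, x i ∈ Ω) ∧ (∀ i, 0 < a i) ∧
    μ = ∑ i, ENNReal.ofReal (a i) • Measure.dirac (x i) ∧
    ∀ J K : Finset (Fin n), J.Nonempty → K.Nonempty → Disjoint J K →
      ∑ j ∈ J, a j ≠ ∑ k ∈ K, a k}

/-! Cover `Ω` by finitely many `δ`-balls centred in `Ω` and make them disjoint; replacing `μ` by
`∑ μ(Aᵢ) δ_{xᵢ}` moves every unit of mass by at most `δ`. Then perturb the weights to
`μ(Aᵢ) + τ 2ⁱ`. The weights `2ⁱ` have distinct disjoint subset sums, so a coincidence of two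
disjoint subset sums of the perturbed weights is a non-degenerate linear equation in `τ`; hence all
but finitely many `τ` work, and a small `τ` changes the total mass and the normalized measure only
slightly. -/

open Metric Function
open scoped NNReal

def HasDistinctSubsetSums {ι : Type*} (a : ι → ℝ) : Prop :=
  ∀ J K : Finset ι, J.Nonempty → K.Nonempty → Disjoint J K → ∑ j ∈ J, a j ≠ ∑ k ∈ K, a k

lemma hasDistinctSubsetSums_two_pow (n : ℕ) :
    HasDistinctSubsetSums fun i : Fin n => (2 : ℝ) ^ (i : ℕ) := by
  intro J K hJ _ hJK hsum
  have hmap : J.map Fin.valEmbedding = K.map Fin.valEmbedding := by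
    apply Finset.geomSum_injective le_rfl
    simp only [Finset.sum_map, Fin.valEmbedding_apply]
    exact_mod_cast (by push_cast; exact hsum :
      ((∑ j ∈ J, 2 ^ (j : ℕ) : ℕ) : ℝ) = ((∑ k ∈ K, 2 ^ (k : ℕ) : ℕ) : ℝ))
  rw [Finset.map_inj] at hmap
  subst hmap
  exact hJ.ne_empty (disjoint_self.mp hJK)

lemma HasDistinctSubsetSums.finite_setOf_not_add_smul {ι : Type*} [Fintype ι] {c : ι → ℝ}
    (hc : HasDistinctSubsetSums c) (a : ι → ℝ) :
    {τ : ℝ | ¬HasDistinctSubsetSums (a + τ • c)}.Finite := by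
  refine (Set.finite_range fun p : Finset ι × Finset ι =>
    (∑ k ∈ p.2, a k - ∑ j ∈ p.1, a j) / (∑ j ∈ p.1, c j - ∑ k ∈ p.2, c k)).subset ?_
  intro τ hτ
  simp only [HasDistinctSubsetSums, not_forall, not_not, Set.mem_ofPred_eq] at hτ
  obtain ⟨J, K, hJ, hK, hJK, hsum⟩ := hτ
  refine ⟨(J, K), ?_⟩
  simp only [Pi.add_apply, Pi.smul_apply, smul_eq_mul, Finset.sum_add_distrib,
    ← Finset.mul_sum] at hsum
  rw [div_eq_iff (sub_ne_zero.mpr (hc J K hJ hK hJK))]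
  linear_combination -hsum

lemma exists_hasDistinctSubsetSums_near {n : ℕ} {a : Fin n → ℝ} (ha : 0 ≤ a) {η : ℝ}
    (hη : 0 < η) :
    ∃ a' : Fin n → ℝ, (∀ i, 0 < a' i) ∧ a ≤ a' ∧ ∑ i, a' i - ∑ i, a i < η ∧
      HasDistinctSubsetSums a' := by
  set c : Fin n → ℝ := fun i => 2 ^ (i : ℕ)
  have hc : ∀ i, 0 < c i := fun i => by positivity
  set C := ∑ i, c i
  have hC : 0 ≤ C := Finset.sum_nonneg fun i _ => (hc i).le
  obtain ⟨τ, ⟨hτ, hτη⟩, hτc⟩ :=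
    ((Set.Ioo_infinite (div_pos hη (by linarith : 0 < C + 1))).sdiff
      ((hasDistinctSubsetSums_two_pow n).finite_setOf_not_add_smul a)).nonempty
  refine ⟨a + τ • c, fun i => add_pos_of_nonneg_of_pos (ha i) (mul_pos hτ (hc i)),
    fun i => le_add_of_nonneg_right (mul_pos hτ (hc i)).le, ?_, not_not.mp hτc⟩
  have hgap : ∑ i, (a + τ • c) i - ∑ i, a i = τ * C := by
    simp only [Pi.add_apply, Pi.smul_apply, smul_eq_mul, Finset.sum_add_distrib, C,
      Finset.mul_sum]
    ring
  rw [hgap]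
  rw [lt_div_iff₀ (by linarith)] at hτη
  nlinarith

lemma IsCompact.exists_measurable_partition_subset_closedBall {E : Type*} [PseudoMetricSpace E]
    [MeasurableSpace E] [OpensMeasurableSpace E] {Ω : Set E} (hΩ : IsCompact Ω) {δ : ℝ}
    (hδ : 0 < δ) :
    ∃ (n : ℕ) (x : Fin n → E) (A : Fin n → Set E), (∀ i, x i ∈ Ω) ∧
      (∀ i, MeasurableSet (A i)) ∧ Pairwise (Disjoint on A) ∧ Ω ⊆ ⋃ i, A i ∧
      ∀ i, A i ⊆ closedBall (x i) δ := by
  obtain ⟨t, htΩ, htfin, hcov⟩ := finite_cover_balls_of_compact hΩ hδ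
  obtain ⟨n, x, -, rfl⟩ := htfin.fin_param
  refine ⟨n, x, disjointed fun i => ball (x i) δ, fun i => htΩ (mem_range_self i), fun i => ?_,
    disjoint_disjointed _, ?_, fun i => (disjointed_subset _ i).trans ball_subset_closedBall⟩
  · rw [disjointed_eq_inter_compl]
    exact measurableSet_ball.inter
      (MeasurableSet.iInter fun j => MeasurableSet.iInter fun _ => measurableSet_ball.compl)
  · simpa [iUnion_disjointed] using hcov

section Discrete

variable {E ι : Type*} [MeasurableSpace E] [MeasurableSingletonClass E] [Fintype ι]
  {w : ι → ℝ}

lemma integral_sum_ofReal_smul_dirac (hw : 0 ≤ w) (x : ι → E) (f : E → ℝ) :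
    ∫ y, f y ∂(∑ i, ENNReal.ofReal (w i) • Measure.dirac (x i)) = ∑ i, w i * f (x i) := by
  rw [integral_finsetSum_measure fun i _ =>
    (integrable_dirac enorm_lt_top).smul_measure ENNReal.ofReal_ne_top]
  refine Finset.sum_congr rfl fun i _ => ?_
  rw [integral_smul_measure, integral_dirac, ENNReal.toReal_ofReal (hw i), smul_eq_mul]

lemma measureReal_univ_sum_ofReal_smul_dirac (hw : 0 ≤ w) (x : ι → E) :
    (∑ i, ENNReal.ofReal (w i) • Measure.dirac (x i)).real univ = ∑ i, w i := by
  simpa using integral_sum_ofReal_smul_dirac hw x fun _ => (1 : ℝ)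

end Discrete

lemma sum_sub_mul_le_mul_sum_abs {ι : Type*} [Fintype ι] {p q f : ι → ℝ} {f₀ R : ℝ}
    (hpq : ∑ i, p i = ∑ i, q i) (hf : ∀ i, |f i - f₀| ≤ R) :
    ∑ i, (p i - q i) * f i ≤ R * ∑ i, |p i - q i| := by
  have hcenter : ∑ i, (p i - q i) * f₀ = 0 := by
    rw [← Finset.sum_mul, Finset.sum_sub_distrib, hpq, sub_self, zero_mul]
  calc ∑ i, (p i - q i) * f i = ∑ i, (p i - q i) * (f i - f₀) := by
        simp only [mul_sub, Finset.sum_sub_distrib, hcenter, sub_zero]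
    _ ≤ ∑ i, |p i - q i| * R := Finset.sum_le_sum fun i _ =>
        (le_abs_self _).trans ((abs_mul _ _).trans_le
          (mul_le_mul_of_nonneg_left (hf i) (abs_nonneg _)))
    _ = R * ∑ i, |p i - q i| := by rw [← Finset.sum_mul, mul_comm]

lemma sum_abs_div_sub_div_le {ι : Type*} [Fintype ι] {a a' : ι → ℝ} (ha : 0 ≤ a) (haa' : a ≤ a')
    (hs : 0 < ∑ i, a i) :
    ∑ i, |a i / ∑ j, a j - a' i / ∑ j, a' j| ≤ 2 * (∑ i, a' i - ∑ i, a i) / ∑ i, a' i := by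
  set s := ∑ i, a i
  set s' := ∑ i, a' i
  have hss' : s ≤ s' := Finset.sum_le_sum fun i _ => haa' i
  have hs' : 0 < s' := hs.trans_le hss'
  have hterm : ∀ i, |a i / s - a' i / s'| ≤ a i * ((s' - s) / (s * s')) + (a' i - a i) / s' := by
    intro i
    have hsplit : a i / s - a' i / s' = a i * ((s' - s) / (s * s')) - (a' i - a i) / s' := by
      field_simp
      ring
    rw [hsplit]
    refine (abs_sub _ _).trans_eq ?_
    rw [abs_of_nonneg (mul_nonneg (ha i) (div_nonneg (by linarith) (by positivity))),
      abs_of_nonneg (div_nonneg (sub_nonneg.mpr (haa' i)) hs'.le)]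
  calc ∑ i, |a i / s - a' i / s'|
      ≤ ∑ i, (a i * ((s' - s) / (s * s')) + (a' i - a i) / s') :=
        Finset.sum_le_sum fun i _ => hterm i
    _ = s * ((s' - s) / (s * s')) + (s' - s) / s' := by
        rw [Finset.sum_add_distrib, ← Finset.sum_mul, ← Finset.sum_div, Finset.sum_sub_distrib]
    _ = 2 * (s' - s) / s' := by
        field_simp
        ring

section Quantization

variable {E ι : Type*} [MeasurableSpace E] [Fintype ι]
  {μ : Measure E} [IsFiniteMeasure μ] {A : ι → Set E}

lemma measureReal_univ_eq_sum_of_partition (hAm : ∀ i, MeasurableSet (A i))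
    (hAd : Pairwise (Disjoint on A)) (hμA : μ (⋃ i, A i)ᶜ = 0) :
    μ.real univ = ∑ i, μ.real (A i) := by
  rw [← measureReal_iUnion_fintype hAd hAm]
  exact measureReal_congr (ae_eq_univ.mpr hμA).symm

lemma integral_sub_sum_le_of_subset_closedBall [PseudoMetricSpace E] [OpensMeasurableSpace E]
    {x : ι → E} {δ : ℝ} {K : ℝ≥0} {φ : E → ℝ} (hAm : ∀ i, MeasurableSet (A i))
    (hAd : Pairwise (Disjoint on A)) (hμA : μ (⋃ i, A i)ᶜ = 0) (hAx : ∀ i, A i ⊆ closedBall (x i) δ) (hφ : LipschitzWith K φ) :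
    ∫ y, φ y ∂μ - ∑ i, μ.real (A i) * φ (x i) ≤ K * δ * μ.real univ := by
  have hnear : ∀ i, ∀ y ∈ A i, ‖φ y - φ (x i)‖ ≤ K * δ := fun i y hy =>
    (hφ.dist_le_mul y (x i)).trans (mul_le_mul_of_nonneg_left (hAx i hy) K.2)
  have hint : ∀ i, IntegrableOn φ (A i) μ := fun i =>
    Measure.integrableOn_of_bounded (measure_ne_top μ _) hφ.continuous.aestronglyMeasurable
      ((ae_restrict_mem (hAm i)).mono fun y hy => (norm_le_insert' _ (φ (x i))).trans
        (add_le_add le_rfl (hnear i y hy)))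
  calc ∫ y, φ y ∂μ - ∑ i, μ.real (A i) * φ (x i)
      = ∑ i, ∫ y in A i, (φ y - φ (x i)) ∂μ := by
        rw [integral_eq_setIntegral (s := ⋃ i, A i) (mem_ae_iff.mpr hμA),
          integral_iUnion_fintype hAm hAd hint, ← Finset.sum_sub_distrib]
        refine Finset.sum_congr rfl fun i _ => ?_
        rw [integral_sub (hint i) (integrableOn_const (measure_ne_top μ _)), setIntegral_const,
          smul_eq_mul]
    _ ≤ ∑ i, K * δ * μ.real (A i) := Finset.sum_le_sum fun i _ =>
        (le_abs_self _).trans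
          (norm_setIntegral_le_of_norm_le_const (measure_lt_top μ _) (hnear i))
    _ = K * δ * μ.real univ := by
        rw [← Finset.mul_sum, measureReal_univ_eq_sum_of_partition hAm hAd hμA]

end Quantization

section Wasserstein

variable {E : Type*} [MeasurableSpace E]

lemma W1_le_of_forall_lipschitzWith [PseudoMetricSpace E] {μ ν : Measure E} {b : ℝ}
    (h : ∀ φ : E → ℝ, LipschitzWith 1 φ → ∫ y, φ y ∂μ - ∫ y, φ y ∂ν ≤ b) : W1 μ ν ≤ b := by
  have : Nonempty {φ : E → ℝ // LipschitzWith 1 φ} :=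
    ⟨⟨fun _ => 0, (LipschitzWith.const 0).weaken zero_le_one⟩⟩
  exact ciSup_le fun φ => h φ.1 φ.2

lemma integral_inv_measure_univ_smul (μ : Measure E) (f : E → ℝ) :
    ∫ y, f y ∂((μ univ)⁻¹ • μ) = (μ.real univ)⁻¹ * ∫ y, f y ∂μ := by
  rw [integral_smul_measure, ENNReal.toReal_inv, smul_eq_mul, measureReal_def]

lemma W1_normalize_sum_dirac_le {ι : Type*} [MetricSpace E] [OpensMeasurableSpace E] [Fintype ι]
    {μ : Measure E} [IsFiniteMeasure μ] (hμ : μ ≠ 0) {A : ι → Set E} {x : ι → E} {a' : ι → ℝ}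
    {z : E} {δ R : ℝ} (hAm : ∀ i, MeasurableSet (A i)) (hAd : Pairwise (Disjoint on A))
    (hμA : μ (⋃ i, A i)ᶜ = 0) (hAx : ∀ i, A i ⊆ closedBall (x i) δ)
    (hxz : ∀ i, dist (x i) z ≤ R) (ha' : ∀ i, μ.real (A i) ≤ a' i) :
    W1 ((μ univ)⁻¹ • μ)
        (((∑ i, ENNReal.ofReal (a' i) • Measure.dirac (x i)) univ)⁻¹ •
          ∑ i, ENNReal.ofReal (a' i) • Measure.dirac (x i)) ≤
      δ + 2 * R * (∑ i, a' i - μ.real univ) / ∑ i, a' i := by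
  set a : ι → ℝ := fun i => μ.real (A i)
  set s := ∑ i, a i
  set s' := ∑ i, a' i
  have hsum : μ.real univ = s := measureReal_univ_eq_sum_of_partition hAm hAd hμA
  have hs : 0 < s :=
    hsum ▸ ENNReal.toReal_pos (Measure.measure_univ_ne_zero.mpr hμ) (measure_ne_top μ _)
  have ha : 0 ≤ a := fun i => measureReal_nonneg
  have hs' : 0 < s' := hs.trans_le (Finset.sum_le_sum fun i _ => ha' i)
  have ha'0 : 0 ≤ a' := fun i => (ha i).trans (ha' i)
  have : Nonempty ι := by
    by_contra hempty
    rw [not_nonempty_iff] at hempty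
    simp [s] at hs
  have hR : 0 ≤ R := dist_nonneg.trans (hxz (Classical.arbitrary ι))
  refine W1_le_of_forall_lipschitzWith fun φ hφ => ?_
  rw [integral_inv_measure_univ_smul, integral_inv_measure_univ_smul,
    integral_sum_ofReal_smul_dirac ha'0, measureReal_univ_sum_ofReal_smul_dirac ha'0, hsum]
  have hquant := integral_sub_sum_le_of_subset_closedBall hAm hAd hμA hAx hφ
  rw [hsum] at hquant
  have hφz : ∀ i, |φ (x i) - φ z| ≤ R := fun i =>
    (hφ.dist_le_mul (x i) z).trans (by simpa using hxz i)
  have hweights := sum_sub_mul_le_mul_sum_abs (p := fun i => a i / s) (q := fun i => a' i / s')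
    (by rw [← Finset.sum_div, ← Finset.sum_div, div_self hs.ne', div_self hs'.ne']) hφz
  have habs := sum_abs_div_sub_div_le ha ha' hs
  calc s⁻¹ * ∫ y, φ y ∂μ - s'⁻¹ * ∑ i, a' i * φ (x i)
      = s⁻¹ * (∫ y, φ y ∂μ - ∑ i, a i * φ (x i)) + ∑ i, (a i / s - a' i / s') * φ (x i) := by
        simp only [mul_sub, Finset.mul_sum, sub_mul, Finset.sum_sub_distrib, div_eq_inv_mul,
          mul_assoc]
        ring
    _ ≤ s⁻¹ * (δ * s) + R * (2 * (s' - s) / s') := by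
        refine add_le_add (mul_le_mul_of_nonneg_left ?_ (inv_nonneg.mpr hs.le))
          (hweights.trans (mul_le_mul_of_nonneg_left habs hR))
        simpa using hquant
    _ = δ + 2 * R * (s' - s) / s' := by
        field_simp

end Wasserstein

theorem MplusFinDif_dense {d : ℕ} (Ω : Set (EuclideanSpace ℝ (Fin d)))
    (hΩcpt : IsCompact Ω) :
    ∀ μ ∈ Mplus Ω, ∀ ε > (0 : ℝ), ∃ ν ∈ MplusFinDif Ω, W1ext μ ν < ε := by
  rintro μ ⟨hμ0, hμtop, hμΩ⟩ ε hε
  have : IsFiniteMeasure μ := ⟨lt_top_iff_ne_top.mpr hμtop⟩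
  obtain ⟨n, x, A, hxΩ, hAm, hAd, hΩA, hAx⟩ :=
    hΩcpt.exists_measurable_partition_subset_closedBall (half_pos hε)
  have hμA : μ (⋃ i, A i)ᶜ = 0 := measure_mono_null (compl_subset_compl.mpr hΩA) hμΩ
  set s := μ.real univ
  have hs : 0 < s := ENNReal.toReal_pos hμ0 hμtop
  set R := diam Ω
  have hR : 0 ≤ R := diam_nonneg
  -- `η` is chosen so that the perturbation costs at most `(2R/s + 1) η = ε/2`.
  obtain ⟨a', ha'0, haa', hgap, ha'dif⟩ := exists_hasDistinctSubsetSums_near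
    (a := fun i => μ.real (A i)) (fun i => measureReal_nonneg)
    (by positivity : 0 < s * ε / (2 * (2 * R + s)))
  have hsum : s = ∑ i, μ.real (A i) := measureReal_univ_eq_sum_of_partition hAm hAd hμA
  rw [← hsum] at hgap
  have hn : 0 < n := Nat.pos_of_ne_zero fun hn => by subst hn; simp at hsum; linarith
  refine ⟨_, ⟨n, hn, x, a', hxΩ, ha'0, rfl, ha'dif⟩, ?_⟩
  have hW1 := W1_normalize_sum_dirac_le (Measure.measure_univ_ne_zero.mp hμ0) hAm hAd hμA hAx
    (fun i => dist_le_diam_of_mem hΩcpt.isBounded (hxΩ i) (hxΩ ⟨0, hn⟩)) haa'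
  set s' := ∑ i, a' i
  have hss' : s ≤ s' := hsum ▸ Finset.sum_le_sum fun i _ => haa' i
  have hmass : (∑ i, ENNReal.ofReal (a' i) • Measure.dirac (x i)).real univ = s' :=
    measureReal_univ_sum_ofReal_smul_dirac (fun i => (ha'0 i).le) x
  rw [W1ext, ← measureReal_def, ← measureReal_def, hmass, abs_of_nonpos (by linarith)]
  calc _ ≤ ε / 2 + 2 * R * (s' - s) / s' + -(s - s') := by gcongr
    _ ≤ ε / 2 + (2 * R + s) * (s' - s) / s := by
        rw [add_assoc, add_mul, add_div, mul_div_cancel_left₀ _ hs.ne']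
        gcongr
        linarith
    _ < ε / 2 + (2 * R + s) * (s * ε / (2 * (2 * R + s))) / s := by gcongr
    _ = ε := by
        field_simp
        ring
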